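/- arXiv:2006.15539 — 2 statements merged into one kernel-verified Lean document; each statement's English description precedes it below -/
import Mathlib

section
/- Let E₁, E₂, E₃ be real vector spaces, T₁ : E₁ → E₂ and T₂ : E₂ → E₃ linear maps, and let K₁, K₁' be companions of T₁ and K₂, K₂' companions of T₂ (finite-rank maps making the sums bijective). Define K = (T₂+K₂)(T₁+K₁) − T₂T₁ and K' = (T₂+K₂')(T₁+K₁') − T₂T₁; these are finite-rank maps and K, K' are companions of T₂T₁. Then det((T₂T₁+K)⁻¹(T₂T₁+K')) = det((T₁+K₁')(T₁+K₁)⁻¹) · det((T₂+K₂)⁻¹(T₂+K₂')). Consequently, K is equivalent to K' (i.e. det((T₂T₁+K)⁻¹(T₂T₁+K')) > 0) if and only if K₁ is equivalent to K₁' and K₂ is equivalent to K₂', or K₁ is not equivalent to K₁' and K₂ is not equivalent to K₂'. -/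
open LinearMap

lemma det_shear {P W : Type*} [AddCommGroup P] [Module ℝ P] [AddCommGroup W] [Module ℝ W]
    (B : W →ₗ[ℝ] P) :
    LinearMap.det (LinearMap.id + (LinearMap.inl ℝ P W) ∘ₗ B ∘ₗ (LinearMap.snd ℝ P W)) = 1 := by
  set N : ℝ → (P × W →ₗ[ℝ] P × W) := fun t =>
    (LinearMap.inl ℝ P W) ∘ₗ (t • B) ∘ₗ (LinearMap.snd ℝ P W) with hN
  set d : ℝ → ℝ := fun t => LinearMap.det (LinearMap.id + N t) with hd
  have hmul : ∀ s t : ℝ, (LinearMap.id + N s) ∘ₗ (LinearMap.id + N t) = LinearMap.id + N (s + t) := by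
    intro s t
    apply LinearMap.ext
    rintro ⟨x, y⟩
    simp [hN, add_smul, Prod.ext_iff]
    abel
  have hdm : ∀ s t : ℝ, d (s + t) = d s * d t := by
    intro s t
    rw [hd]
    simp only
    rw [← hmul s t, LinearMap.det_comp]
  have hconj : ∀ (c : ℝ), c ≠ 0 → ∀ t, d (c * t) = d t := by
    intro c hc t
    set e : (P × W) ≃ₗ[ℝ] (P × W) := LinearEquiv.ofLinear
      (LinearMap.prodMap (c • LinearMap.id) LinearMap.id)
      (LinearMap.prodMap (c⁻¹ • LinearMap.id) LinearMap.id)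
      (by apply LinearMap.ext; rintro ⟨x, y⟩; simp [smul_smul]; rw [inv_mul_cancel₀ hc]; simp)
      (by apply LinearMap.ext; rintro ⟨x, y⟩; simp [smul_smul]; rw [mul_inv_cancel₀ hc]; simp) with he
    have key : (e : P × W →ₗ[ℝ] P × W) ∘ₗ (LinearMap.id + N t) ∘ₗ (e.symm : P × W →ₗ[ℝ] P × W)
        = LinearMap.id + N (c * t) := by
      apply LinearMap.ext
      rintro ⟨x, y⟩
      simp [he, hN, Prod.ext_iff, smul_smul]
      rw [mul_inv_cancel₀ hc]; simp
    have := LinearMap.det_conj (LinearMap.id + N t) e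
    rw [key] at this
    simpa [hd] using this
  have h0 : d 0 = 1 := by
    simp [hd, hN]
  have h12 : d (1/2 : ℝ) = d 1 := by
    have := hconj (1/2 : ℝ) (by norm_num) 1
    simpa using this
  have h1 : d 1 = d 1 * d 1 := by
    have h := hdm (1/2 : ℝ) (1/2)
    rw [show (1/2 : ℝ) + 1/2 = 1 by norm_num, h12] at h
    exact h
  have hne : d 1 ≠ 0 := by
    intro h
    have := hdm 1 (-1)
    simp [h, h0] at this
  have : d 1 = 1 := by
    have h2 : d 1 * d 1 = d 1 * 1 := by rw [← h1, mul_one]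
    exact mul_left_cancel₀ hne h2
  simpa [hd, hN] using this

lemma det_prodMap_id {P W : Type*} [AddCommGroup P] [Module ℝ P] [AddCommGroup W] [Module ℝ W]
    [FiniteDimensional ℝ P] [FiniteDimensional ℝ W] (A : P →ₗ[ℝ] P) :
    LinearMap.det (LinearMap.prodMap A (LinearMap.id : W →ₗ[ℝ] W)) = LinearMap.det A := by
  classical
  let bP := Module.finBasis ℝ P
  let bW := Module.finBasis ℝ W
  rw [← LinearMap.det_toMatrix (bP.prod bW), LinearMap.toMatrix_prodMap,
    Matrix.det_fromBlocks_zero₂₁, LinearMap.det_toMatrix, LinearMap.toMatrix_id, Matrix.det_one,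
    mul_one]

lemma det_snd_invariant {P W : Type*} [AddCommGroup P] [Module ℝ P] [AddCommGroup W] [Module ℝ W]
    [FiniteDimensional ℝ P] [FiniteDimensional ℝ W] (F : P × W →ₗ[ℝ] P × W)
    (hF : ∀ z, (F z).2 = z.2) :
    LinearMap.det F =
      LinearMap.det ((LinearMap.fst ℝ P W) ∘ₗ F ∘ₗ (LinearMap.inl ℝ P W)) := by
  set A : P →ₗ[ℝ] P := (LinearMap.fst ℝ P W) ∘ₗ F ∘ₗ (LinearMap.inl ℝ P W) with hA
  set B : W →ₗ[ℝ] P := (LinearMap.fst ℝ P W) ∘ₗ F ∘ₗ (LinearMap.inr ℝ P W) with hB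
  have hdecomp : F = (LinearMap.id + (LinearMap.inl ℝ P W) ∘ₗ B ∘ₗ (LinearMap.snd ℝ P W)) ∘ₗ
      (LinearMap.prodMap A LinearMap.id) := by
    apply LinearMap.ext
    rintro ⟨x, y⟩
    have hz : ((x, y) : P × W) = (x, 0) + (0, y) := by simp
    rw [hz, map_add]
    have h1 : (F (x, 0)).2 = 0 := hF (x, 0)
    have h2 : (F (0, y)).2 = y := hF (0, y)
    simp only [LinearMap.comp_apply, LinearMap.add_apply, LinearMap.id_apply,
      LinearMap.prodMap_apply, LinearMap.inl_apply, LinearMap.snd_apply, LinearMap.fst_apply,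
      LinearMap.inr_apply, Prod.map_apply]
    apply Prod.ext
    · simp [hA, hB, Prod.fst_add]
    · simp [h1, h2, Prod.snd_add]
  rw [hdecomp, LinearMap.det_comp, det_shear, det_prodMap_id, one_mul]

lemma det_eq_det_restrict_core {V : Type*} [AddCommGroup V] [Module ℝ V] [FiniteDimensional ℝ V]
    (f : V →ₗ[ℝ] V) (q : Submodule ℝ V) (hq : ∀ x, f x - x ∈ q) (hmap : ∀ x ∈ q, f x ∈ q) :
    LinearMap.det f = LinearMap.det (f.restrict hmap) := by
  obtain ⟨W, hW⟩ := Submodule.exists_isCompl q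
  set e := Submodule.prodEquivOfIsCompl q W hW with he
  set F : q × W →ₗ[ℝ] q × W := (e.symm : V →ₗ[ℝ] q × W) ∘ₗ f ∘ₗ (e : q × W →ₗ[ℝ] V) with hF
  have hdet : LinearMap.det f = LinearMap.det F := by
    have := LinearMap.det_conj F e
    rw [hF] at this
    rw [← this]
    congr 1
    apply LinearMap.ext; intro x
    simp
  have hsnd : ∀ z, (F z).2 = z.2 := by
    rintro ⟨x, y⟩
    have h1 : f (e (x, y)) = (e (x, y)) + (f (e (x, y)) - e (x, y)) := by abel
    have h2 : f (e (x, y)) - e (x, y) ∈ q := hq _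
    rw [hF]
    simp only [LinearMap.comp_apply, LinearEquiv.coe_coe]
    rw [h1, map_add]
    have h3 : e.symm (f (e (x, y)) - e (x, y)) = (⟨_, h2⟩, 0) :=
      Submodule.prodEquivOfIsCompl_symm_apply_left q W hW ⟨_, h2⟩
    rw [h3, LinearEquiv.symm_apply_apply]
    simp
  rw [hdet, det_snd_invariant F hsnd]
  congr 1
  apply LinearMap.ext; intro x
  have hx : f (e (x, 0)) ∈ q := by
    have : e ((x : q), (0 : W)) = (x : V) := by simp [he]
    rw [this]; exact hmap _ x.2
  apply Subtype.ext
  simp only [LinearMap.comp_apply, LinearMap.inl_apply, LinearMap.fst_apply, hF,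
    LinearEquiv.coe_coe]
  have h1 : e ((x : q), (0 : W)) = (x : V) := by simp [he]
  rw [h1]
  have h2 : e.symm (f (x : V)) = (⟨f (x : V), hmap _ x.2⟩, 0) :=
    Submodule.prodEquivOfIsCompl_symm_apply_left q W hW ⟨_, hmap _ x.2⟩
  rw [h2]
  rfl

/-- The determinant of an admissible endomorphism `S` (one with `range (id − S)`
finite-dimensional): the determinant of the restriction of `S` to any finite-dimensional
subspace containing `range (id − S)`, here the minimal one. -/
noncomputable def admDet {E : Type*} [AddCommGroup E] [Module ℝ E] (S : E →ₗ[ℝ] E) : ℝ :=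
  LinearMap.det (S.restrict
    (p := LinearMap.range ((LinearMap.id : E →ₗ[ℝ] E) - S))
    (q := LinearMap.range ((LinearMap.id : E →ₗ[ℝ] E) - S))
    (fun x hx => by
      have h1 : ((LinearMap.id : E →ₗ[ℝ] E) - S) x ∈
          LinearMap.range ((LinearMap.id : E →ₗ[ℝ] E) - S) :=
        LinearMap.mem_range_self _ x
      have h2 : S x = x - ((LinearMap.id : E →ₗ[ℝ] E) - S) x := by
        simp
      rw [h2]
      exact Submodule.sub_mem _ hx h1))

open Classical in
/-- Inverse of a bijective linear map (junk value `0` otherwise). -/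
noncomputable def linInv {E F : Type*} [AddCommGroup E] [Module ℝ E] [AddCommGroup F] [Module ℝ F]
    (f : E →ₗ[ℝ] F) : F →ₗ[ℝ] E :=
  if h : Function.Bijective ⇑f then ((LinearEquiv.ofBijective f h).symm : F →ₗ[ℝ] E) else 0

lemma admDet_eq {E : Type*} [AddCommGroup E] [Module ℝ E] (S : E →ₗ[ℝ] E)
    (p : Submodule ℝ E) [FiniteDimensional ℝ p]
    (hp : ∀ x, x - S x ∈ p) (hmap : ∀ x ∈ p, S x ∈ p) :
    admDet S = LinearMap.det (S.restrict hmap) := by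
  set V := LinearMap.range ((LinearMap.id : E →ₗ[ℝ] E) - S) with hV
  have hVp : V ≤ p := by
    rintro _ ⟨x, rfl⟩; simpa using hp x
  set f := S.restrict hmap with hf
  set q := V.comap p.subtype with hqdef
  have hq1 : ∀ x : p, f x - x ∈ q := by
    intro x
    have hmem : ((S (x : E)) - (x : E)) ∈ V := by
      have h1 := LinearMap.mem_range_self ((LinearMap.id : E →ₗ[ℝ] E) - S) (x : E)
      have h2 : -(((LinearMap.id : E →ₗ[ℝ] E) - S) (x : E)) = S (x : E) - (x : E) := by simp
      rw [← h2]; exact neg_mem h1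
    show ((f x - x : p) : E) ∈ V
    have : ((f x - x : p) : E) = S (x : E) - (x : E) := by
      simp [hf, LinearMap.restrict_apply]
    rw [this]; exact hmem
  have hmap2 : ∀ x ∈ q, f x ∈ q := by
    intro x hx
    have h1 : f x = x + (f x - x) := by abel
    rw [h1]; exact Submodule.add_mem _ hx (hq1 x)
  have hcore := det_eq_det_restrict_core f q hq1 hmap2
  -- now relate det f to admDet definition and det (f.restrict) to det of S.restrict on V
  rw [admDet]
  set eV := Submodule.comapSubtypeEquivOfLe hVp with heV
  have hconj : S.restrict (p := V) (q := V)
      (fun x hx => by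
        have h1 : ((LinearMap.id : E →ₗ[ℝ] E) - S) x ∈ V := LinearMap.mem_range_self _ x
        have h2 : S x = x - ((LinearMap.id : E →ₗ[ℝ] E) - S) x := by simp
        rw [h2]; exact Submodule.sub_mem _ hx h1) =
      (eV : q →ₗ[ℝ] V) ∘ₗ (f.restrict hmap2) ∘ₗ (eV.symm : V →ₗ[ℝ] q) := by
    apply LinearMap.ext; intro x
    apply Subtype.ext
    simp [LinearMap.restrict_apply, heV, hf, Submodule.comapSubtypeEquivOfLe]
  rw [hconj]
  have := LinearMap.det_conj (f.restrict hmap2) eV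
  rw [this, ← hcore]

lemma restrict_id_det {E : Type*} [AddCommGroup E] [Module ℝ E] : admDet (LinearMap.id : E →ₗ[ℝ] E) = 1 := by
  rw [admDet]
  have : (LinearMap.id : E →ₗ[ℝ] E).restrict
      (p := LinearMap.range ((LinearMap.id : E →ₗ[ℝ] E) - LinearMap.id))
      (q := LinearMap.range ((LinearMap.id : E →ₗ[ℝ] E) - LinearMap.id))
      (fun x hx => by simpa using hx) = LinearMap.id := by
    apply LinearMap.ext; intro x; apply Subtype.ext; simp [LinearMap.restrict_apply]
  rw [this, LinearMap.det_id]

lemma admDet_mul {E : Type*} [AddCommGroup E] [Module ℝ E] (S₁ S₂ : E →ₗ[ℝ] E)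
    (h₁ : FiniteDimensional ℝ (LinearMap.range ((LinearMap.id : E →ₗ[ℝ] E) - S₁)))
    (h₂ : FiniteDimensional ℝ (LinearMap.range ((LinearMap.id : E →ₗ[ℝ] E) - S₂))) :
    admDet (S₁ ∘ₗ S₂) = admDet S₁ * admDet S₂ := by
  set p := LinearMap.range ((LinearMap.id : E →ₗ[ℝ] E) - S₁) ⊔
    LinearMap.range ((LinearMap.id : E →ₗ[ℝ] E) - S₂) with hp
  haveI : FiniteDimensional ℝ p := Submodule.finiteDimensional_sup _ _
  have mem₁ : ∀ x : E, x - S₁ x ∈ p := fun x => by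
    apply Submodule.mem_sup_left
    simpa using LinearMap.mem_range_self ((LinearMap.id : E →ₗ[ℝ] E) - S₁) x
  have mem₂ : ∀ x : E, x - S₂ x ∈ p := fun x => by
    apply Submodule.mem_sup_right
    simpa using LinearMap.mem_range_self ((LinearMap.id : E →ₗ[ℝ] E) - S₂) x
  have hmap₁ : ∀ x ∈ p, S₁ x ∈ p := fun x hx => by
    have : S₁ x = x - (x - S₁ x) := by abel
    rw [this]; exact Submodule.sub_mem _ hx (mem₁ x)
  have hmap₂ : ∀ x ∈ p, S₂ x ∈ p := fun x hx => by
    have : S₂ x = x - (x - S₂ x) := by abel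
    rw [this]; exact Submodule.sub_mem _ hx (mem₂ x)
  have mem₁₂ : ∀ x : E, x - (S₁ ∘ₗ S₂) x ∈ p := fun x => by
    have : x - (S₁ ∘ₗ S₂) x = (x - S₂ x) + (S₂ x - S₁ (S₂ x)) := by simp
    rw [this]; exact Submodule.add_mem _ (mem₂ x) (mem₁ (S₂ x))
  have hmap₁₂ : ∀ x ∈ p, (S₁ ∘ₗ S₂) x ∈ p := fun x hx => by
    have : (S₁ ∘ₗ S₂) x = x - (x - (S₁ ∘ₗ S₂) x) := by abel
    rw [this]; exact Submodule.sub_mem _ hx (mem₁₂ x)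
  rw [admDet_eq (S₁ ∘ₗ S₂) p mem₁₂ hmap₁₂, admDet_eq S₁ p mem₁ hmap₁,
    admDet_eq S₂ p mem₂ hmap₂]
  have hrc : (S₁ ∘ₗ S₂).restrict hmap₁₂ = (S₁.restrict hmap₁) ∘ₗ (S₂.restrict hmap₂) := by
    apply LinearMap.ext; intro x; apply Subtype.ext; simp [LinearMap.restrict_apply]
  rw [hrc, LinearMap.det_comp]

lemma adm_of_le {E : Type*} [AddCommGroup E] [Module ℝ E] {S : E →ₗ[ℝ] E} {p : Submodule ℝ E}
    [FiniteDimensional ℝ p] (hp : ∀ x, x - S x ∈ p) :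
    FiniteDimensional ℝ (LinearMap.range ((LinearMap.id : E →ₗ[ℝ] E) - S)) := by
  apply Submodule.finiteDimensional_of_le (S₂ := p)
  rintro _ ⟨x, rfl⟩; simpa using hp x

lemma admDet_conj {E F : Type*} [AddCommGroup E] [Module ℝ E] [AddCommGroup F] [Module ℝ F]
    (S : F →ₗ[ℝ] F) (e : E ≃ₗ[ℝ] F)
    (hS : FiniteDimensional ℝ (LinearMap.range ((LinearMap.id : F →ₗ[ℝ] F) - S))) :
    (∀ x : E, x - ((e.symm : F →ₗ[ℝ] E) ∘ₗ S ∘ₗ (e : E →ₗ[ℝ] F)) x ∈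
      (LinearMap.range ((LinearMap.id : F →ₗ[ℝ] F) - S)).map (e.symm : F →ₗ[ℝ] E)) ∧
    admDet ((e.symm : F →ₗ[ℝ] E) ∘ₗ S ∘ₗ (e : E →ₗ[ℝ] F)) = admDet S := by
  set p := LinearMap.range ((LinearMap.id : F →ₗ[ℝ] F) - S) with hpdef
  set q := p.map (e.symm : F →ₗ[ℝ] E) with hqdef
  set C : E →ₗ[ℝ] E := (e.symm : F →ₗ[ℝ] E) ∘ₗ S ∘ₗ (e : E →ₗ[ℝ] F) with hC
  have hq : ∀ x : E, x - C x ∈ q := by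
    intro x
    have h1 : x - C x = e.symm (e x - S (e x)) := by
      simp [hC]
    rw [h1]
    have hmem : e x - S (e x) ∈ p := ⟨e x, by simp⟩
    exact Submodule.mem_map_of_mem hmem
  refine ⟨hq, ?_⟩
  have hmapq : ∀ x ∈ q, C x ∈ q := fun x hx => by
    have : C x = x - (x - C x) := by abel
    rw [this]; exact Submodule.sub_mem _ hx (hq x)
  have hp : ∀ x : F, x - S x ∈ p := fun x => ⟨x, by simp⟩
  have hmapp : ∀ x ∈ p, S x ∈ p := fun x hx => by
    have : S x = x - (x - S x) := by abel
    rw [this]; exact Submodule.sub_mem _ hx (hp x)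
  rw [admDet_eq C q hq hmapq, admDet_eq S p hp hmapp]
  set eq : p ≃ₗ[ℝ] q := e.symm.submoduleMap p with heq
  have hconj : C.restrict hmapq = (eq : p →ₗ[ℝ] q) ∘ₗ (S.restrict hmapp) ∘ₗ
      (eq.symm : q →ₗ[ℝ] p) := by
    apply LinearMap.ext; intro z
    apply Subtype.ext
    have h1 : ((eq.symm z : p) : F) = e.symm.symm (z : E) :=
      e.symm.submoduleMap_symm_apply p z
    rw [LinearEquiv.symm_symm] at h1
    simp [LinearMap.restrict_apply, hC, heq, h1]
    exact (e.symm.submoduleMap_apply p ⟨S (e ↑z), hmapp _ (h1 ▸ (eq.symm z).2)⟩).symm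
  rw [hconj, LinearMap.det_conj]

lemma linInv_comp {E F : Type*} [AddCommGroup E] [Module ℝ E] [AddCommGroup F] [Module ℝ F]
    {f : E →ₗ[ℝ] F} (h : Function.Bijective ⇑f) : linInv f ∘ₗ f = LinearMap.id := by
  rw [linInv, dif_pos h]
  apply LinearMap.ext; intro x
  have h1 : (LinearEquiv.ofBijective f h).symm (f x) = x := by
    rw [← LinearEquiv.ofBijective_apply (hf := h) f]
    exact (LinearEquiv.ofBijective f h).symm_apply_apply x
  simpa using h1

lemma comp_linInv {E F : Type*} [AddCommGroup E] [Module ℝ E] [AddCommGroup F] [Module ℝ F]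
    {f : E →ₗ[ℝ] F} (h : Function.Bijective ⇑f) : f ∘ₗ linInv f = LinearMap.id := by
  rw [linInv, dif_pos h]
  apply LinearMap.ext; intro x
  have : f ((LinearEquiv.ofBijective f h).symm x) =
      (LinearEquiv.ofBijective f h) ((LinearEquiv.ofBijective f h).symm x) := rfl
  simp [this]

lemma fd_range_sub {E F : Type*} [AddCommGroup E] [Module ℝ E] [AddCommGroup F] [Module ℝ F]
    (f g : E →ₗ[ℝ] F) (hf : FiniteDimensional ℝ (LinearMap.range f))
    (hg : FiniteDimensional ℝ (LinearMap.range g)) :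
    FiniteDimensional ℝ (LinearMap.range (f - g)) := by
  haveI := hf; haveI := hg
  apply Submodule.finiteDimensional_of_le (S₂ := LinearMap.range f ⊔ LinearMap.range g)
  rintro _ ⟨x, rfl⟩
  exact Submodule.sub_mem _ (Submodule.mem_sup_left (LinearMap.mem_range_self f x))
    (Submodule.mem_sup_right (LinearMap.mem_range_self g x))

lemma adm_linInv_comp {E F : Type*} [AddCommGroup E] [Module ℝ E] [AddCommGroup F] [Module ℝ F]
    (f g : E →ₗ[ℝ] F) (hf : Function.Bijective ⇑f)
    (hfd : FiniteDimensional ℝ (LinearMap.range (f - g))) :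
    FiniteDimensional ℝ (LinearMap.range ((LinearMap.id : E →ₗ[ℝ] E) - linInv f ∘ₗ g)) := by
  haveI := hfd
  have hkey : (LinearMap.id : E →ₗ[ℝ] E) - linInv f ∘ₗ g = linInv f ∘ₗ (f - g) := by
    apply LinearMap.ext; intro x
    have h1 : linInv f (f x) = x := by
      simpa using LinearMap.congr_fun (linInv_comp hf) x
    simp [map_sub, h1]
  rw [hkey, LinearMap.range_comp]
  infer_instance

/-- Given companions `K₁, K₁'` of `T₁` and `K₂, K₂'` of `T₂`, the maps
`K = (T₂+K₂)(T₁+K₁) − T₂T₁` and `K' = (T₂+K₂')(T₁+K₁') − T₂T₁` are companions of `T₂T₁`, and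
`det((T₂T₁+K)⁻¹(T₂T₁+K')) = det((T₁+K₁')(T₁+K₁)⁻¹) · det((T₂+K₂)⁻¹(T₂+K₂'))`; consequently
`K ∼ K'` iff (`K₁ ∼ K₁'` and `K₂ ∼ K₂'`) or (`K₁ ≁ K₁'` and `K₂ ≁ K₂'`). -/
theorem oriented_composition_well_defined
    {E₁ E₂ E₃ : Type*} [AddCommGroup E₁] [Module ℝ E₁] [AddCommGroup E₂] [Module ℝ E₂]
    [AddCommGroup E₃] [Module ℝ E₃]
    (T₁ : E₁ →ₗ[ℝ] E₂) (T₂ : E₂ →ₗ[ℝ] E₃)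
    (K₁ K₁' : E₁ →ₗ[ℝ] E₂) (K₂ K₂' : E₂ →ₗ[ℝ] E₃)
    (hr₁ : FiniteDimensional ℝ (LinearMap.range K₁))
    (hr₁' : FiniteDimensional ℝ (LinearMap.range K₁'))
    (hr₂ : FiniteDimensional ℝ (LinearMap.range K₂))
    (hr₂' : FiniteDimensional ℝ (LinearMap.range K₂'))
    (hb₁ : Function.Bijective ⇑(T₁ + K₁)) (hb₁' : Function.Bijective ⇑(T₁ + K₁'))
    (hb₂ : Function.Bijective ⇑(T₂ + K₂)) (hb₂' : Function.Bijective ⇑(T₂ + K₂'))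
    (K K' : E₁ →ₗ[ℝ] E₃)
    (hK : K = (T₂ + K₂) ∘ₗ (T₁ + K₁) - T₂ ∘ₗ T₁)
    (hK' : K' = (T₂ + K₂') ∘ₗ (T₁ + K₁') - T₂ ∘ₗ T₁) :
    FiniteDimensional ℝ (LinearMap.range K) ∧
    FiniteDimensional ℝ (LinearMap.range K') ∧
    Function.Bijective ⇑(T₂ ∘ₗ T₁ + K) ∧
    Function.Bijective ⇑(T₂ ∘ₗ T₁ + K') ∧
    admDet (linInv (T₂ ∘ₗ T₁ + K) ∘ₗ (T₂ ∘ₗ T₁ + K')) =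
      admDet ((T₁ + K₁') ∘ₗ linInv (T₁ + K₁)) *
        admDet (linInv (T₂ + K₂) ∘ₗ (T₂ + K₂')) ∧
    (0 < admDet (linInv (T₂ ∘ₗ T₁ + K) ∘ₗ (T₂ ∘ₗ T₁ + K')) ↔
      ((0 < admDet (linInv (T₁ + K₁') ∘ₗ (T₁ + K₁)) ∧
          0 < admDet (linInv (T₂ + K₂') ∘ₗ (T₂ + K₂))) ∨
        (¬ 0 < admDet (linInv (T₁ + K₁') ∘ₗ (T₁ + K₁)) ∧
          ¬ 0 < admDet (linInv (T₂ + K₂') ∘ₗ (T₂ + K₂))))) := by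
  haveI := hr₁; haveI := hr₁'; haveI := hr₂; haveI := hr₂'
  set A := T₁ + K₁ with hA
  set A' := T₁ + K₁' with hA'
  set B := T₂ + K₂ with hB
  set B' := T₂ + K₂' with hB'
  -- the compositions
  have hCsum : T₂ ∘ₗ T₁ + K = B ∘ₗ A := by rw [hK]; abel
  have hCsum' : T₂ ∘ₗ T₁ + K' = B' ∘ₗ A' := by rw [hK']; abel
  have hbC : Function.Bijective ⇑(B ∘ₗ A) := by
    rw [LinearMap.coe_comp]; exact hb₂.comp hb₁
  have hbC' : Function.Bijective ⇑(B' ∘ₗ A') := by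
    rw [LinearMap.coe_comp]; exact hb₂'.comp hb₁'
  -- finite rank of K and K'
  have hfdK : FiniteDimensional ℝ (LinearMap.range K) := by
    have hKeq : K = T₂ ∘ₗ K₁ + K₂ ∘ₗ A := by
      rw [hK]; apply LinearMap.ext; intro x; simp [hA, hB]; abel
    rw [hKeq]
    apply Submodule.finiteDimensional_of_le
      (S₂ := (LinearMap.range K₁).map T₂ ⊔ LinearMap.range K₂)
    rintro _ ⟨x, rfl⟩
    exact Submodule.add_mem _
      (Submodule.mem_sup_left (Submodule.mem_map_of_mem (LinearMap.mem_range_self K₁ x)))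
      (Submodule.mem_sup_right (LinearMap.mem_range_self K₂ (A x)))
  have hfdK' : FiniteDimensional ℝ (LinearMap.range K') := by
    have hKeq : K' = T₂ ∘ₗ K₁' + K₂' ∘ₗ A' := by
      rw [hK']; apply LinearMap.ext; intro x; simp [hA', hB']; abel
    rw [hKeq]
    apply Submodule.finiteDimensional_of_le
      (S₂ := (LinearMap.range K₁').map T₂ ⊔ LinearMap.range K₂')
    rintro _ ⟨x, rfl⟩
    exact Submodule.add_mem _
      (Submodule.mem_sup_left (Submodule.mem_map_of_mem (LinearMap.mem_range_self K₁' x)))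
      (Submodule.mem_sup_right (LinearMap.mem_range_self K₂' (A' x)))
  -- pointwise inverse facts
  have haA : ∀ y, A (linInv A y) = y := fun y => by
    simpa using LinearMap.congr_fun (comp_linInv hb₁) y
  have haAi : ∀ x, linInv A (A x) = x := fun x => by
    simpa using LinearMap.congr_fun (linInv_comp hb₁) x
  have haA' : ∀ y, A' (linInv A' y) = y := fun y => by
    simpa using LinearMap.congr_fun (comp_linInv hb₁') y
  have haB : ∀ y, B (linInv B y) = y := fun y => by
    simpa using LinearMap.congr_fun (comp_linInv hb₂) y
  have haB' : ∀ y, B' (linInv B' y) = y := fun y => by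
    simpa using LinearMap.congr_fun (comp_linInv hb₂') y
  have haBi : ∀ x, linInv B (B x) = x := fun x => by
    simpa using LinearMap.congr_fun (linInv_comp hb₂) x
  have haCi : ∀ x, linInv (B ∘ₗ A) ((B ∘ₗ A) x) = x := fun x => by
    simpa using LinearMap.congr_fun (linInv_comp hbC) x
  set SA := linInv A ∘ₗ A' with hSA
  set SA2 := linInv A' ∘ₗ A with hSA2
  set SB := linInv B ∘ₗ B' with hSB
  set SB2 := linInv B' ∘ₗ B with hSB2
  have hsubA : A - A' = K₁ - K₁' := by rw [hA, hA']; abel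
  have hsubA2 : A' - A = K₁' - K₁ := by rw [hA, hA']; abel
  have hsubB : B - B' = K₂ - K₂' := by rw [hB, hB']; abel
  have hsubB2 : B' - B = K₂' - K₂ := by rw [hB, hB']; abel
  have hadmSA : FiniteDimensional ℝ
      (LinearMap.range ((LinearMap.id : E₁ →ₗ[ℝ] E₁) - SA)) :=
    adm_linInv_comp A A' hb₁ (by rw [hsubA]; exact fd_range_sub _ _ hr₁ hr₁')
  have hadmSA2 : FiniteDimensional ℝ
      (LinearMap.range ((LinearMap.id : E₁ →ₗ[ℝ] E₁) - SA2)) :=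
    adm_linInv_comp A' A hb₁' (by rw [hsubA2]; exact fd_range_sub _ _ hr₁' hr₁)
  have hadmSB : FiniteDimensional ℝ
      (LinearMap.range ((LinearMap.id : E₂ →ₗ[ℝ] E₂) - SB)) :=
    adm_linInv_comp B B' hb₂ (by rw [hsubB]; exact fd_range_sub _ _ hr₂ hr₂')
  have hadmSB2 : FiniteDimensional ℝ
      (LinearMap.range ((LinearMap.id : E₂ →ₗ[ℝ] E₂) - SB2)) :=
    adm_linInv_comp B' B hb₂' (by rw [hsubB2]; exact fd_range_sub _ _ hr₂' hr₂)
  haveI := hadmSA; haveI := hadmSA2; haveI := hadmSB; haveI := hadmSB2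
  -- conjugation
  set e₁ : E₁ ≃ₗ[ℝ] E₂ := LinearEquiv.ofBijective A hb₁ with he₁
  have he₁c : (e₁ : E₁ →ₗ[ℝ] E₂) = A := rfl
  have he₁s : (e₁.symm : E₂ →ₗ[ℝ] E₁) = linInv A := by
    rw [linInv, dif_pos hb₁]
  obtain ⟨hmemC, hdetC⟩ := admDet_conj SB e₁ hadmSB
  rw [he₁s, he₁c] at hmemC hdetC
  have hadmCONJ : FiniteDimensional ℝ (LinearMap.range
      ((LinearMap.id : E₁ →ₗ[ℝ] E₁) - linInv A ∘ₗ SB ∘ₗ A)) := adm_of_le hmemC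
  -- the key decomposition
  have hinvC : ∀ y, linInv (B ∘ₗ A) y = linInv A (linInv B y) := by
    intro y
    have h4 : (B ∘ₗ A) (linInv A (linInv B y)) = y := by simp [haA, haB]
    calc linInv (B ∘ₗ A) y = linInv (B ∘ₗ A) ((B ∘ₗ A) (linInv A (linInv B y))) := by rw [h4]
      _ = linInv A (linInv B y) := haCi _
  have hM : linInv (B ∘ₗ A) ∘ₗ (B' ∘ₗ A') = (linInv A ∘ₗ SB ∘ₗ A) ∘ₗ SA := by
    apply LinearMap.ext; intro x
    simp [hinvC, hSB, hSA, haA]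
  have hdetM : admDet (linInv (B ∘ₗ A) ∘ₗ (B' ∘ₗ A')) = admDet SB * admDet SA := by
    rw [hM, admDet_mul _ _ hadmCONJ hadmSA, hdetC]
  -- second conjugation : A' ∘ₗ linInv A
  have hdetC2 : admDet (A' ∘ₗ linInv A) = admDet SA := by
    obtain ⟨_, hd2⟩ := admDet_conj SA e₁.symm hadmSA
    have heq2 : (e₁.symm.symm : E₁ →ₗ[ℝ] E₂) ∘ₗ SA ∘ₗ (e₁.symm : E₂ →ₗ[ℝ] E₁) =
        A' ∘ₗ linInv A := by
      rw [LinearEquiv.symm_symm, he₁c, he₁s]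
      apply LinearMap.ext; intro y
      simp [hSA, haA]
    rw [heq2] at hd2
    exact hd2
  -- products equal to one
  have hid1 : SA ∘ₗ SA2 = LinearMap.id := by
    apply LinearMap.ext; intro x; simp [hSA, hSA2, haA', haAi]
  have hid2 : SB ∘ₗ SB2 = LinearMap.id := by
    apply LinearMap.ext; intro x; simp [hSB, hSB2, haB', haBi]
  have hx1 : admDet SA * admDet SA2 = 1 := by
    rw [← admDet_mul _ _ hadmSA hadmSA2, hid1]; exact restrict_id_det
  have hy1 : admDet SB * admDet SB2 = 1 := by
    rw [← admDet_mul _ _ hadmSB hadmSB2, hid2]; exact restrict_id_det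
  refine ⟨hfdK, hfdK', by rw [hCsum]; exact hbC, by rw [hCsum']; exact hbC', ?_, ?_⟩
  · rw [hCsum, hCsum', hdetM, hdetC2]
    ring
  · rw [hCsum, hCsum', hdetM]
    set a := admDet SA with ha0
    set b := admDet SB with hb0
    set x := admDet SA2 with hx0
    set y := admDet SB2 with hy0
    have key : (b * a) * (x * y) = 1 := by
      have h5 : (b * a) * (x * y) = (a * x) * (b * y) := by ring
      rw [h5, hx1, hy1, mul_one]
    have hxne : x ≠ 0 := by
      intro h; rw [h, mul_zero] at hx1; exact one_ne_zero hx1.symm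
    have hyne : y ≠ 0 := by
      intro h; rw [h, mul_zero] at hy1; exact one_ne_zero hy1.symm
    constructor
    · intro h
      have hxy : 0 < x * y := by
        by_contra hc
        push_neg at hc
        have h2 : (b * a) * (x * y) ≤ (b * a) * 0 := mul_le_mul_of_nonneg_left hc h.le
        rw [mul_zero] at h2
        linarith
      rcases mul_pos_iff.mp hxy with ⟨hx, hy⟩ | ⟨hx, hy⟩
      · exact Or.inl ⟨hx, hy⟩
      · exact Or.inr ⟨not_lt.mpr hx.le, not_lt.mpr hy.le⟩
    · intro h
      have hxy : 0 < x * y := by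
        rcases h with ⟨hx, hy⟩ | ⟨hx, hy⟩
        · exact mul_pos hx hy
        · have hx' : x < 0 := lt_of_le_of_ne (not_lt.mp hx) hxne
          have hy' : y < 0 := lt_of_le_of_ne (not_lt.mp hy) hyne
          exact mul_pos_of_neg_of_neg hx' hy'
      by_contra hc
      push_neg at hc
      have h2 : (x * y) * (b * a) ≤ (x * y) * 0 := mul_le_mul_of_nonneg_left hc hxy.le
      rw [mul_zero] at h2
      have key2 : (x * y) * (b * a) = 1 := by rw [mul_comm]; exact key
      linarith
end

section
/- Let E₁, E₂, E₃ be real vector spaces, let T₁ : E₁ → E₂ and T₂ : E₂ → E₃ be bijective linear maps, and let K₁ be a companion of T₁ and K₂ a companion of T₂ (finite-rank maps with T₁+K₁ and T₂+K₂ bijective). Then K := (T₂+K₂)(T₁+K₁) − T₂T₁ is a companion of the bijective map T₂T₁, and the sign of det((T₂T₁)⁻¹(T₂T₁+K)) equals the product of the sign of det(T₁⁻¹(T₁+K₁)) and the sign of det(T₂⁻¹(T₂+K₂)). -/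
/-! The perturbed composite factors as
`(T₂T₁)⁻¹(T₂+K₂)(T₁+K₁) = T₁⁻¹ [T₂⁻¹(T₂+K₂)] T₁ ∘ T₁⁻¹(T₁+K₁)`.
The admissible determinant may be computed on any finite-dimensional subspace `P` containing
`range (id − S)`, because `S` acts as the identity on `P ⧸ range (id − S)`. Computing both factors
on one common such subspace makes it multiplicative, and transporting `P` along `T₁` makes it
invariant under conjugation; so already the determinants, not only their signs, multiply. -/

open LinearMap

theorem Real.sign_mul (a b : ℝ) : Real.sign (a * b) = Real.sign a * Real.sign b := by
  rcases lt_trichotomy a 0 with ha | rfl | ha <;>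
    rcases lt_trichotomy b 0 with hb | rfl | hb <;>
    simp [Real.sign_of_pos, Real.sign_of_neg, mul_pos_of_neg_of_neg, mul_neg_of_neg_of_pos,
      mul_neg_of_pos_of_neg, *]

section Determinant

variable {𝕜 V : Type*} [Field 𝕜] [AddCommGroup V] [Module 𝕜 V]

theorem LinearMap.apply_mem_of_sub_mem {f : V →ₗ[𝕜] V} {W : Submodule 𝕜 V}
    (hf : ∀ x, x - f x ∈ W) : ∀ x ∈ W, f x ∈ W := fun x hx => by
  simpa using W.sub_mem hx (hf x)

theorem LinearMap.det_eq_det_restrict_of_sub_mem [FiniteDimensional 𝕜 V] (f : V →ₗ[𝕜] V)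
    {W : Submodule 𝕜 V} (hf : ∀ x, x - f x ∈ W) :
    f.det = (f.restrict (apply_mem_of_sub_mem hf)).det := by
  have hquot : W.mapQ W f (apply_mem_of_sub_mem hf) = LinearMap.id := by
    ext x
    simpa [Submodule.Quotient.eq] using W.neg_mem (hf x)
  rw [det_eq_det_mul_det W f (apply_mem_of_sub_mem hf), hquot, det_id, mul_one]

theorem LinearMap.det_restrict_eq_of_le (f : V →ₗ[𝕜] V) {W P : Submodule 𝕜 V} (hWP : W ≤ P)
    [FiniteDimensional 𝕜 P] (hf : ∀ x ∈ P, x - f x ∈ W)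
    (hW : ∀ x ∈ W, f x ∈ W) (hP : ∀ x ∈ P, f x ∈ P) :
    (f.restrict hP).det = (f.restrict hW).det := by
  let e := Submodule.comapSubtypeEquivOfLe hWP
  have hconj : f.restrict hW = (e : _ →ₗ[𝕜] W) ∘ₗ
      ((f.restrict hP).restrict (apply_mem_of_sub_mem (W := W.comap P.subtype)
        fun x => hf x x.2)) ∘ₗ (e.symm : W →ₗ[𝕜] _) := by
    ext; rfl
  rw [hconj, det_conj]
  exact det_eq_det_restrict_of_sub_mem (f.restrict hP) (W := W.comap P.subtype) fun x => hf x x.2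

end Determinant

section FiniteRank

variable {𝕜 E₁ E₂ E₃ : Type*} [Field 𝕜] [AddCommGroup E₁] [Module 𝕜 E₁] [AddCommGroup E₂]
  [Module 𝕜 E₂] [AddCommGroup E₃] [Module 𝕜 E₃]

theorem LinearMap.finiteDimensional_range_add_comp_add_sub_comp (T₁ K₁ : E₁ →ₗ[𝕜] E₂)
    (T₂ K₂ : E₂ →ₗ[𝕜] E₃) [FiniteDimensional 𝕜 (range K₁)] [FiniteDimensional 𝕜 (range K₂)] :
    FiniteDimensional 𝕜 (range ((T₂ + K₂) ∘ₗ (T₁ + K₁) - T₂ ∘ₗ T₁)) := by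
  refine Submodule.finiteDimensional_of_le (S₂ := (range K₁).map T₂ ⊔ range K₂) ?_
  rintro _ ⟨x, rfl⟩
  have hx : ((T₂ + K₂) ∘ₗ (T₁ + K₁) - T₂ ∘ₗ T₁) x = T₂ (K₁ x) + K₂ ((T₁ + K₁) x) := by
    simp only [sub_apply, comp_apply, add_apply, map_add]
    abel
  rw [hx]
  exact Submodule.add_mem_sup (Submodule.mem_map_of_mem (mem_range_self K₁ x))
    (mem_range_self K₂ _)

end FiniteRank

section Inverse

variable {E₁ E₂ E₃ : Type*} [AddCommGroup E₁] [Module ℝ E₁] [AddCommGroup E₂] [Module ℝ E₂]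
  [AddCommGroup E₃] [Module ℝ E₃]

theorem linInv_eq_symm {T : E₁ →ₗ[ℝ] E₂} (hT : Function.Bijective T) :
    linInv T = (LinearEquiv.ofBijective T hT).symm :=
  dif_pos hT

theorem linInv_apply_apply {T : E₁ →ₗ[ℝ] E₂} (hT : Function.Bijective T) (x : E₁) :
    linInv T (T x) = x := by
  rw [linInv_eq_symm hT]
  exact (LinearEquiv.ofBijective T hT).symm_apply_apply x

theorem apply_linInv_apply {T : E₁ →ₗ[ℝ] E₂} (hT : Function.Bijective T) (y : E₂) :
    T (linInv T y) = y := by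
  rw [linInv_eq_symm hT]
  exact (LinearEquiv.ofBijective T hT).apply_symm_apply y

theorem linInv_comp_s10 {T₁ : E₁ →ₗ[ℝ] E₂} {T₂ : E₂ →ₗ[ℝ] E₃} (hT₁ : Function.Bijective T₁)
    (hT₂ : Function.Bijective T₂) : linInv (T₂ ∘ₗ T₁) = linInv T₁ ∘ₗ linInv T₂ := by
  have hT : Function.Bijective (T₂ ∘ₗ T₁) := hT₂.comp hT₁
  ext z
  apply hT.injective
  rw [apply_linInv_apply hT]
  simp [apply_linInv_apply hT₁, apply_linInv_apply hT₂]

theorem linInv_comp_comp_eq {T₁ : E₁ →ₗ[ℝ] E₂} {T₂ : E₂ →ₗ[ℝ] E₃} (hT₁ : Function.Bijective T₁)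
    (hT₂ : Function.Bijective T₂) (S₁ : E₁ →ₗ[ℝ] E₂) (S₂ : E₂ →ₗ[ℝ] E₃) :
    linInv (T₂ ∘ₗ T₁) ∘ₗ S₂ ∘ₗ S₁ =
      (linInv T₁ ∘ₗ (linInv T₂ ∘ₗ S₂) ∘ₗ T₁) ∘ₗ (linInv T₁ ∘ₗ S₁) := by
  ext x
  simp [linInv_comp_s10 hT₁ hT₂, apply_linInv_apply hT₁]

theorem sub_linInv_comp_add_apply_mem {T : E₁ →ₗ[ℝ] E₂} (hT : Function.Bijective T)
    (K : E₁ →ₗ[ℝ] E₂) (x : E₁) : x - (linInv T ∘ₗ (T + K)) x ∈ (range K).map (linInv T) :=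
  ⟨-K x, neg_mem (mem_range_self K x), by simp [linInv_apply_apply hT]⟩

theorem sub_linInv_comp_comp_apply_mem {T : E₁ →ₗ[ℝ] E₂} (hT : Function.Bijective T)
    {S : E₂ →ₗ[ℝ] E₂} {P : Submodule ℝ E₂} (hS : ∀ y, y - S y ∈ P) (x : E₁) :
    x - (linInv T ∘ₗ S ∘ₗ T) x ∈ P.map (linInv T) :=
  ⟨T x - S (T x), hS (T x), by simp [linInv_apply_apply hT]⟩

end Inverse

section AdmissibleDeterminant

variable {E F : Type*} [AddCommGroup E] [Module ℝ E] [AddCommGroup F] [Module ℝ F]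

theorem admDet_eq_det_restrict (S : E →ₗ[ℝ] E) {P : Submodule ℝ E} [FiniteDimensional ℝ P]
    (hS : ∀ x, x - S x ∈ P) : admDet S = (S.restrict (apply_mem_of_sub_mem hS)).det := by
  have hle : range (LinearMap.id - S) ≤ P := by
    rintro _ ⟨x, rfl⟩
    exact hS x
  exact (det_restrict_eq_of_le S hle (fun x _ => ⟨x, rfl⟩) _ _).symm

theorem admDet_comp (S₁ S₂ : E →ₗ[ℝ] E) {P₁ P₂ : Submodule ℝ E} [FiniteDimensional ℝ P₁]
    [FiniteDimensional ℝ P₂] (h₁ : ∀ x, x - S₁ x ∈ P₁) (h₂ : ∀ x, x - S₂ x ∈ P₂) :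
    admDet (S₁ ∘ₗ S₂) = admDet S₁ * admDet S₂ := by
  have h₁' : ∀ x, x - S₁ x ∈ P₁ ⊔ P₂ := fun x => Submodule.mem_sup_left (h₁ x)
  have h₂' : ∀ x, x - S₂ x ∈ P₁ ⊔ P₂ := fun x => Submodule.mem_sup_right (h₂ x)
  have h : ∀ x, x - (S₁ ∘ₗ S₂) x ∈ P₁ ⊔ P₂ := fun x => by
    simpa using add_mem (h₂' x) (h₁' (S₂ x))
  rw [admDet_eq_det_restrict _ h, admDet_eq_det_restrict _ h₁', admDet_eq_det_restrict _ h₂',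
    ← det_comp]
  rfl

theorem admDet_linInv_comp_comp {T : E →ₗ[ℝ] F} (hT : Function.Bijective T) (S : F →ₗ[ℝ] F)
    {P : Submodule ℝ F} [FiniteDimensional ℝ P] (hS : ∀ y, y - S y ∈ P) :
    admDet (linInv T ∘ₗ S ∘ₗ T) = admDet S := by
  let e := LinearEquiv.ofBijective T hT
  have hP : P.map (linInv T) = P.map (e.symm : F →ₗ[ℝ] E) := by rw [linInv_eq_symm hT]
  have hS' := sub_linInv_comp_comp_apply_mem hT hS
  rw [hP] at hS'
  rw [admDet_eq_det_restrict _ hS', admDet_eq_det_restrict S hS]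
  have hconj : (linInv T ∘ₗ S ∘ₗ T).restrict (apply_mem_of_sub_mem hS') =
      (e.symm.submoduleMap P : P →ₗ[ℝ] _) ∘ₗ S.restrict (apply_mem_of_sub_mem hS) ∘ₗ
        ((e.symm.submoduleMap P).symm : _ →ₗ[ℝ] P) := by
    ext z
    simp [linInv_eq_symm hT, e]
  rw [hconj, det_conj]

end AdmissibleDeterminant

/-- For bijective `T₁, T₂` with companions `K₁, K₂`, the map
`K = (T₂+K₂)(T₁+K₁) − T₂T₁` is a companion of the bijective composition `T₂T₁`, and the sign of
`det((T₂T₁)⁻¹(T₂T₁+K))` is the product of the signs of `det(T₁⁻¹(T₁+K₁))` and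
`det(T₂⁻¹(T₂+K₂))`. -/
theorem sign_of_oriented_composition
    {E₁ E₂ E₃ : Type*} [AddCommGroup E₁] [Module ℝ E₁] [AddCommGroup E₂] [Module ℝ E₂]
    [AddCommGroup E₃] [Module ℝ E₃]
    (T₁ : E₁ →ₗ[ℝ] E₂) (T₂ : E₂ →ₗ[ℝ] E₃)
    (hT₁ : Function.Bijective ⇑T₁) (hT₂ : Function.Bijective ⇑T₂)
    (K₁ : E₁ →ₗ[ℝ] E₂) (K₂ : E₂ →ₗ[ℝ] E₃)
    (hr₁ : FiniteDimensional ℝ (LinearMap.range K₁))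
    (hr₂ : FiniteDimensional ℝ (LinearMap.range K₂))
    (hb₁ : Function.Bijective ⇑(T₁ + K₁)) (hb₂ : Function.Bijective ⇑(T₂ + K₂))
    (K : E₁ →ₗ[ℝ] E₃) (hK : K = (T₂ + K₂) ∘ₗ (T₁ + K₁) - T₂ ∘ₗ T₁) :
    FiniteDimensional ℝ (LinearMap.range K) ∧
    Function.Bijective ⇑(T₂ ∘ₗ T₁ + K) ∧
    Real.sign (admDet (linInv (T₂ ∘ₗ T₁) ∘ₗ (T₂ ∘ₗ T₁ + K))) =
      Real.sign (admDet (linInv T₁ ∘ₗ (T₁ + K₁))) *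
        Real.sign (admDet (linInv T₂ ∘ₗ (T₂ + K₂))) := by
  subst hK
  have hsum : T₂ ∘ₗ T₁ + ((T₂ + K₂) ∘ₗ (T₁ + K₁) - T₂ ∘ₗ T₁) = (T₂ + K₂) ∘ₗ (T₁ + K₁) :=
    add_sub_cancel _ _
  have hadm₁ := sub_linInv_comp_add_apply_mem hT₁ K₁
  have hadm₂ := sub_linInv_comp_add_apply_mem hT₂ K₂
  refine ⟨finiteDimensional_range_add_comp_add_sub_comp T₁ K₁ T₂ K₂, ?_, ?_⟩
  · rw [hsum, coe_comp]
    exact hb₂.comp hb₁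
  · rw [hsum, linInv_comp_comp_eq hT₁ hT₂,
      admDet_comp _ _ (sub_linInv_comp_comp_apply_mem hT₁ hadm₂) hadm₁,
      admDet_linInv_comp_comp hT₁ _ hadm₂, Real.sign_mul, mul_comm]
end
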